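/- arXiv:1108.5710 — 4 statements merged into one kernel-verified Lean document; each statement's English description precedes it below -/
import Mathlib

section
/- There exists an energy function E on two binary variables and a labeling x such that the minimum of E over the union of all αβ-swap move sets at x is strictly smaller than the minimum of E over the union of all ICM move sets at x. (E.g., x = (1,1) with unique minimizer (2,2) and all other configurations having higher energy.) -/
/-!
An αβ-swap move may relabel every variable at once, while an ICM move changes a single variable.
So from `x = (0, 0)` the swap move space reaches `(1, 1)` but the ICM move space does not, and an
energy whose unique minimizer is `(1, 1)` separates the two minima.
-/

open Set

def icmMove {V : Type*} {N : ℕ} (x : V → Fin N) (j : V) : Set (V → Fin N) :=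
  {y | ∀ i, i ≠ j → y i = x i}

def swapMove {V : Type*} {N : ℕ} (x : V → Fin N) (α β : Fin N) : Set (V → Fin N) :=
  {y | ∀ i, ((x i = α ∨ x i = β) → (y i = α ∨ y i = β)) ∧
            (¬(x i = α ∨ x i = β) → y i = x i)}

def expMove {V : Type*} {N : ℕ} (x : V → Fin N) (α : Fin N) : Set (V → Fin N) :=
  {y | ∀ i, y i = α ∨ y i = x i}

def genMove {V : Type*} {N : ℕ} (x : V → Fin N) (α β : Fin N) : Set (V → Fin N) :=
  {y | ∀ i, (x i = α → (y i = α ∨ y i = β)) ∧ (x i ≠ α → (y i = α ∨ y i = x i))}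

section MoveSpaces

variable {V : Type*} {N : ℕ} {x y : V → Fin N}

theorem mem_swapMove_of_forall_mem_pair {α β : Fin N} (hx : ∀ i, x i = α ∨ x i = β)
    (hy : ∀ i, y i = α ∨ y i = β) : y ∈ swapMove x α β :=
  fun i => ⟨fun _ => hy i, fun h => absurd (hx i) h⟩

theorem notMem_iUnion_icmMove_of_ne {i k : V} (hik : i ≠ k) (hi : y i ≠ x i) (hk : y k ≠ x k) :
    y ∉ ⋃ j, icmMove x j := by
  simp only [mem_iUnion, not_exists]
  intro j hj
  by_cases hij : i = j
  · exact hk (hj k (hij ▸ hik.symm))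
  · exact hi (hj i hij)

end MoveSpaces

theorem csInf_image_lt_csInf_image {α β : Type*} [Finite α] [ConditionallyCompleteLinearOrder β]
    {E : α → β} {S T : Set α} {z : α} (hz : z ∈ S) (hT : T.Nonempty)
    (hE : ∀ y ∈ T, E z < E y) : sInf (E '' S) < sInf (E '' T) := by
  obtain ⟨y, hy, hyT⟩ := (hT.image E).csInf_mem (toFinite _)
  calc sInf (E '' S) ≤ E z := csInf_le (toFinite _).bddBelow (mem_image_of_mem E hz)
    _ < E y := hE y hy
    _ = sInf (E '' T) := hyT

theorem stmt4 :
    ∃ (E : (Fin 2 → Fin 2) → ℝ) (x : Fin 2 → Fin 2),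
      sInf (E '' ⋃ (α : Fin 2) (β : Fin 2), swapMove x α β) <
        sInf (E '' ⋃ (j : Fin 2), icmMove x j) := by
  let z : Fin 2 → Fin 2 := fun _ => 1
  refine ⟨fun y => if y = z then 0 else 1, fun _ => 0, ?_⟩
  have hz_swap : z ∈ ⋃ (α : Fin 2) (β : Fin 2), swapMove (fun _ => 0) α β :=
    mem_iUnion₂.2 ⟨0, 1, mem_swapMove_of_forall_mem_pair (fun _ => Or.inl rfl) fun _ => Or.inr rfl⟩
  have hz_icm : z ∉ ⋃ j, icmMove (fun _ => 0) j :=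
    notMem_iUnion_icmMove_of_ne (i := 0) (k := 1) (by decide) (by decide) (by decide)
  have hx_icm : (fun _ => 0) ∈ ⋃ j, icmMove (fun _ : Fin 2 => (0 : Fin 2)) j :=
    mem_iUnion.2 ⟨0, fun _ _ => rfl⟩
  refine csInf_image_lt_csInf_image hz_swap ⟨_, hx_icm⟩ fun y hy => ?_
  have hyz : y ≠ z := fun h => hz_icm (h ▸ hy)
  simp [hyz]
end

section
/- There exists an energy function E on two variables with two states and a labeling x such that the minimum of E over the union of all αβ-swap move sets at x is strictly smaller than the minimum over the union of all α-expansion move sets at x. Specifically with x = (1,2) and unique minimizer (2,1): no single α-expansion from x can reach (2,1), but the swap with {α,β} = {1,2} can. -/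
open Set

theorem stmt5 :
    ∃ (E : (Fin 2 → Fin 2) → ℝ) (x : Fin 2 → Fin 2),
      sInf (E '' ⋃ (α : Fin 2) (β : Fin 2), swapMove x α β) <
        sInf (E '' ⋃ (α : Fin 2), expMove x α) := by
  classical
  set x : Fin 2 → Fin 2 := ![0, 1] with hx
  set f : Fin 2 → Fin 2 := ![1, 0] with hf
  refine ⟨fun y => if y = f then 0 else 1, x, ?_⟩
  set E : (Fin 2 → Fin 2) → ℝ := fun y => if y = f then 0 else 1 with hE
  have hswap : f ∈ ⋃ (α : Fin 2) (β : Fin 2), swapMove x α β := by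
    refine mem_iUnion.mpr ⟨0, mem_iUnion.mpr ⟨1, ?_⟩⟩
    intro i
    fin_cases i <;> simp [x, f, Matrix.cons_val_zero, Matrix.cons_val_one]
  have h0 : sInf (E '' ⋃ (α : Fin 2) (β : Fin 2), swapMove x α β) ≤ 0 := by
    apply csInf_le
    · refine ⟨0, ?_⟩
      rintro r ⟨y, -, rfl⟩
      simp only [E]
      split <;> norm_num
    · exact ⟨f, hswap, by simp [E]⟩
  have h1 : E '' (⋃ (α : Fin 2), expMove x α) = {1} := by
    ext r
    constructor
    · rintro ⟨y, hy, rfl⟩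
      obtain ⟨α, hyα⟩ := mem_iUnion.mp hy
      have hyne : y ≠ f := by
        fin_cases α
        · intro h
          have := hyα 0
          rw [h] at this
          simp [x, f] at this
        · intro h
          have := hyα 1
          rw [h] at this
          simp [x, f] at this
      simp [E, hyne]
    · rintro rfl
      refine ⟨x, mem_iUnion.mpr ⟨0, fun i => Or.inr rfl⟩, ?_⟩
      have : x ≠ f := by
        intro h
        have := congrFun h 0
        simp [x, f] at this
      simp [E, this]
  rw [h1]
  simp only [csInf_singleton]
  linarith
end

section
/- There exists an energy function E on three variables with three states and a labeling x = (1,2,3) whose unique minimizer is (1,1,1), such that the minimum of E over the union of all α-expansion move sets at x is strictly smaller than the minimum over the union of all αβ-swap move sets at x. (A single 1-expansion reaches (1,1,1), but no single αβ-swap from (1,2,3) can change both the variable labeled 2 and the variable labeled 3.) -/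
open Set

lemma zero_not_in_swap : ∀ α β : Fin 3, ![0, 0, 0] ∉ swapMove ![0, 1, 2] α β := by
  intro α β
  simp only [swapMove, mem_setOf_eq]
  revert α β
  decide

theorem stmt6 :
    ∃ E : (Fin 3 → Fin 3) → ℝ,
      (∀ y : Fin 3 → Fin 3, y ≠ ![0, 0, 0] → E ![0, 0, 0] < E y) ∧
      sInf (E '' ⋃ (α : Fin 3), expMove ![0, 1, 2] α) <
        sInf (E '' ⋃ (α : Fin 3) (β : Fin 3), swapMove ![0, 1, 2] α β) := by
  set x : Fin 3 → Fin 3 := ![0, 1, 2] with hx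
  refine ⟨fun y => if y = ![0, 0, 0] then 0 else 1, ?_, ?_⟩
  · intro y hy
    simp [hy]
  · have hswap : (fun y => if y = ![0, 0, 0] then (0 : ℝ) else 1) ''
        (⋃ (α : Fin 3) (β : Fin 3), swapMove x α β) = {1} := by
      ext z
      constructor
      · rintro ⟨y, hy, rfl⟩
        simp only [mem_iUnion] at hy
        obtain ⟨α, β, hy⟩ := hy
        have : y ≠ ![0, 0, 0] := fun h => zero_not_in_swap α β (h ▸ hy)
        simp [this]
      · rintro rfl
        refine ⟨x, ?_, ?_⟩
        · simp only [mem_iUnion]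
          exact ⟨0, 0, fun i => ⟨fun h => h, fun _ => rfl⟩⟩
        · have : x ≠ ![0, 0, 0] := by decide
          simp [this]
    rw [hswap, csInf_singleton]
    have hmem : (0 : ℝ) ∈ (fun y => if y = ![0, 0, 0] then (0 : ℝ) else 1) ''
        (⋃ (α : Fin 3), expMove x α) := by
      refine ⟨![0, 0, 0], ?_, by simp⟩
      simp only [mem_iUnion]
      exact ⟨0, fun i => Or.inl (by fin_cases i <;> rfl)⟩
    have hbdd : BddBelow ((fun y => if y = ![0, 0, 0] then (0 : ℝ) else 1) ''
        (⋃ (α : Fin 3), expMove x α)) := by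
      refine ⟨0, ?_⟩
      rintro z ⟨y, _, rfl⟩
      dsimp only
      split <;> norm_num
    calc sInf _ ≤ 0 := csInf_le hbdd hmem
    _ < 1 := by norm_num
end

section
/- There exists an energy function E on three variables with three states and a labeling x = (1,2,3) whose unique minimizer is (2,1,1), such that the minimum of E over the union of all α-expansion β-shrink move sets at x is strictly smaller than both the minimum over the union of all αβ-swap move sets and the minimum over the union of all α-expansion move sets at x. (The labeling (2,1,1) is reached from (1,2,3) by a 1-expansion 2-shrink move, but is neither reachable by a single swap nor a single expansion.) -/
open Set

noncomputable def Eaux : (Fin 3 → Fin 3) → ℝ := fun y => if y = ![1,0,0] then 0 else 1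

lemma Eaux_nonneg (y : Fin 3 → Fin 3) : (0:ℝ) ≤ Eaux y := by
  unfold Eaux; split <;> norm_num

lemma Eaux_ne (y : Fin 3 → Fin 3) (h : y ≠ ![1,0,0]) : Eaux y = 1 := by
  simp [Eaux, h]

lemma gen_inf : sInf (Eaux '' ⋃ (α : Fin 3) (β : Fin 3), genMove ![0, 1, 2] α β) = 0 := by
  have hmem : (0:ℝ) ∈ Eaux '' ⋃ (α : Fin 3) (β : Fin 3), genMove ![0, 1, 2] α β := by
    refine ⟨![1,0,0], ?_, by simp [Eaux]⟩
    refine mem_iUnion.2 ⟨0, mem_iUnion.2 ⟨1, ?_⟩⟩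
    intro i; fin_cases i <;> simp [genMove]
  have hbdd : (0:ℝ) ∈ lowerBounds (Eaux '' ⋃ (α : Fin 3) (β : Fin 3), genMove ![0, 1, 2] α β) := by
    rintro r ⟨y, -, rfl⟩; exact Eaux_nonneg y
  exact le_antisymm (csInf_le ⟨0, hbdd⟩ hmem) (le_csInf ⟨0, hmem⟩ hbdd)

lemma swap_not : ∀ α β : Fin 3, ![1,0,0] ∉ swapMove ![0, 1, 2] α β := by
  simp only [swapMove, mem_setOf_eq, not_forall]
  decide

lemma exp_not : ∀ α : Fin 3, ![1,0,0] ∉ expMove ![0, 1, 2] α := by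
  simp only [expMove, mem_setOf_eq, not_forall]
  decide

lemma swap_inf : sInf (Eaux '' ⋃ (α : Fin 3) (β : Fin 3), swapMove ![0, 1, 2] α β) = 1 := by
  have hmem : (1:ℝ) ∈ Eaux '' ⋃ (α : Fin 3) (β : Fin 3), swapMove ![0, 1, 2] α β := by
    refine ⟨![0,1,2], ?_, Eaux_ne _ (by decide)⟩
    refine mem_iUnion.2 ⟨0, mem_iUnion.2 ⟨0, ?_⟩⟩
    intro i; fin_cases i <;> simp [swapMove]
  have hbdd : (1:ℝ) ∈ lowerBounds (Eaux '' ⋃ (α : Fin 3) (β : Fin 3), swapMove ![0, 1, 2] α β) := by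
    rintro r ⟨y, hy, rfl⟩
    obtain ⟨α, hy⟩ := mem_iUnion.1 hy
    obtain ⟨β, hy⟩ := mem_iUnion.1 hy
    have : y ≠ ![1,0,0] := fun h => swap_not α β (h ▸ hy)
    rw [Eaux_ne _ this]
  exact le_antisymm (csInf_le ⟨0, fun r hr => hr.elim fun y hy => hy.2 ▸ Eaux_nonneg y⟩ hmem)
    (le_csInf ⟨1, hmem⟩ hbdd)

lemma exp_inf : sInf (Eaux '' ⋃ (α : Fin 3), expMove ![0, 1, 2] α) = 1 := by
  have hmem : (1:ℝ) ∈ Eaux '' ⋃ (α : Fin 3), expMove ![0, 1, 2] α := by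
    refine ⟨![0,1,2], ?_, Eaux_ne _ (by decide)⟩
    refine mem_iUnion.2 ⟨0, ?_⟩
    intro i; right; rfl
  have hbdd : (1:ℝ) ∈ lowerBounds (Eaux '' ⋃ (α : Fin 3), expMove ![0, 1, 2] α) := by
    rintro r ⟨y, hy, rfl⟩
    obtain ⟨α, hy⟩ := mem_iUnion.1 hy
    have : y ≠ ![1,0,0] := fun h => exp_not α (h ▸ hy)
    rw [Eaux_ne _ this]
  exact le_antisymm (csInf_le ⟨0, fun r hr => hr.elim fun y hy => hy.2 ▸ Eaux_nonneg y⟩ hmem)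
    (le_csInf ⟨1, hmem⟩ hbdd)

theorem stmt9 :
    ∃ E : (Fin 3 → Fin 3) → ℝ,
      (∀ y : Fin 3 → Fin 3, y ≠ ![1, 0, 0] → E ![1, 0, 0] < E y) ∧
      sInf (E '' ⋃ (α : Fin 3) (β : Fin 3), genMove ![0, 1, 2] α β) <
        sInf (E '' ⋃ (α : Fin 3) (β : Fin 3), swapMove ![0, 1, 2] α β) ∧
      sInf (E '' ⋃ (α : Fin 3) (β : Fin 3), genMove ![0, 1, 2] α β) <
        sInf (E '' ⋃ (α : Fin 3), expMove ![0, 1, 2] α) := by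
  refine ⟨Eaux, ?_, ?_, ?_⟩
  · intro y hy
    rw [Eaux_ne y hy]
    simp [Eaux]
  · rw [gen_inf, swap_inf]; norm_num
  · rw [gen_inf, exp_inf]; norm_num
end
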